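/- arXiv:1901.00222 — 3 statements merged into one kernel-verified Lean document; each statement's English description precedes it below -/
import Mathlib

section
/- Assume m is even and l′ = 2m+1 is odd (case (i)). Let λ ∈ ℂ with λ^{2m+2} = 1 and λ ≠ 1, and let v = v^λ ∈ ℂ^{l+1} be as defined in the context. Then v ≠ 0 and v is a λ-eigenvector for the permutation action of s on ℂ^{l+1}: v_{s^{−1}(j)} = λ·v_j for all 1 ≤ j ≤ l+1. -/
/- Common framework: type A_l root system realized in ℝ^{ℕ} (coordinates 1,…,l+1 used),
   the Weyl group as permutations of ℕ acting by permuting coordinates, and the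
   Weyl group element s = s₁s₂ of Proposition 4.2 (all four parity cases). -/

noncomputable section

namespace DPW

/-- The ambient vector space (only coordinates 1,…,l+1 are used). -/
abbrev V : Type := ℕ → ℝ

/-- Standard basis vector e_i. -/
def evec (i : ℕ) : V := fun j => if j = i then 1 else 0

/-- The root e_i − e_j. -/
def rt (i j : ℕ) : V := evec i - evec j

/-- The root system Δ of type A_l. -/
def Delta (l : ℕ) : Set V :=
  {v | ∃ i j, 1 ≤ i ∧ i ≤ l + 1 ∧ 1 ≤ j ∧ j ≤ l + 1 ∧ i ≠ j ∧ v = rt i j}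

/-- Positive roots Δ₊. -/
def DeltaPos (l : ℕ) : Set V :=
  {v | ∃ i j, 1 ≤ i ∧ i < j ∧ j ≤ l + 1 ∧ v = rt i j}

/-- Negative roots Δ₋ = −Δ₊. -/
def DeltaNeg (l : ℕ) : Set V := {v | -v ∈ DeltaPos l}

/-- Action of a permutation on V : (σ·v)_j = v_{σ⁻¹(j)}. -/
def pact (σ : Equiv.Perm ℕ) (v : V) : V := fun j => v (σ⁻¹ j)

/-- row(e_a − e_b) = a. -/
def rowOf (v : V) : ℕ := sInf {a | v a = 1}

/-- col(e_a − e_b) = b. -/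
def colOf (v : V) : ℕ := sInf {b | v b = (-1 : ℝ)}

/-- Product of the simple reflections s_{α_i} = (i, i+1) for i in a list. -/
def swapProd (idxs : List ℕ) : Equiv.Perm ℕ :=
  (idxs.map (fun i => Equiv.swap i (i + 1))).prod

/-- The Weyl group element s = s₁s₂ (cases (i)–(iv) according to the parities of
    m = ⌊(l′−1)/2⌋ and l′; here p = l − l′ and s_γ = (m+1, m+p+2)). -/
def weylS (l l' : ℕ) : Equiv.Perm ℕ :=
  let m := (l' - 1) / 2
  let p := l - l'
  if m % 2 = 0 then
    if l' % 2 = 1 then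
      -- case (i)
      (swapProd (List.range' 2 (m / 2) 2) * swapProd (List.range' (m + p + 2) (m / 2) 2)) *
        (swapProd (List.range' 1 (m / 2) 2) * Equiv.swap (m + 1) (m + p + 2) *
          swapProd (List.range' (m + p + 3) (m / 2) 2))
    else
      -- case (ii)
      (swapProd (List.range' 2 (m / 2) 2) * swapProd (List.range' (m + p + 2) (m / 2 + 1) 2)) *
        (swapProd (List.range' 1 (m / 2) 2) * Equiv.swap (m + 1) (m + p + 2) *
          swapProd (List.range' (m + p + 3) (m / 2) 2))
  else
    if l' % 2 = 1 then
      -- case (iii)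
      (swapProd (List.range' 1 ((m + 1) / 2) 2) *
          swapProd (List.range' (m + p + 2) ((m + 1) / 2) 2)) *
        (swapProd (List.range' 2 ((m - 1) / 2) 2) * Equiv.swap (m + 1) (m + p + 2) *
          swapProd (List.range' (m + p + 3) ((m - 1) / 2) 2))
    else
      -- case (iv)
      (swapProd (List.range' 1 ((m + 1) / 2) 2) *
          swapProd (List.range' (m + p + 2) ((m + 1) / 2) 2)) *
        (swapProd (List.range' 2 ((m - 1) / 2) 2) * Equiv.swap (m + 1) (m + p + 2) *
          swapProd (List.range' (m + p + 3) ((m + 1) / 2) 2))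

/-- Δ_s = {α ∈ Δ₊ : sα ∈ Δ₋}. -/
def DeltaS (l : ℕ) (s : Equiv.Perm ℕ) : Set V :=
  {v ∈ DeltaPos l | pact s v ∈ DeltaNeg l}

/-- Δ_{s⁻¹} = {α ∈ Δ₊ : s⁻¹α ∈ Δ₋}. -/
def DeltaSinv (l : ℕ) (s : Equiv.Perm ℕ) : Set V :=
  {v ∈ DeltaPos l | pact s⁻¹ v ∈ DeltaNeg l}

/-- (Δ̄_K)₊ = {α ∈ Δ₊ : sα ≠ α}. -/
def DeltaKpos (l : ℕ) (s : Equiv.Perm ℕ) : Set V :=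
  {v ∈ DeltaPos l | pact s v ≠ v}

/-- (Δ̄_K)₋ = −(Δ̄_K)₊. -/
def DeltaKneg (l : ℕ) (s : Equiv.Perm ℕ) : Set V := {v | -v ∈ DeltaKpos l s}

/-- Δ^C = {α ∈ (Δ̄_K)₊ : row(sα) = row(α)}. -/
def DeltaC (l : ℕ) (s : Equiv.Perm ℕ) : Set V :=
  {v ∈ DeltaKpos l s | rowOf (pact s v) = rowOf v}

/-- Δ^R = {α ∈ (Δ̄_K)₊ : col(sα) = col(α)}. -/
def DeltaR (l : ℕ) (s : Equiv.Perm ℕ) : Set V :=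
  {v ∈ DeltaKpos l s | colOf (pact s v) = colOf v}

/-- Δ^O = (Δ̄_K)₊ \ (Δ^C ∪ Δ^R). -/
def DeltaO (l : ℕ) (s : Equiv.Perm ℕ) : Set V :=
  DeltaKpos l s \ (DeltaC l s ∪ DeltaR l s)

/-- Δ₁^O = {α ∈ Δ^O : row(α) ≥ m+p+2}. -/
def DeltaO1 (l : ℕ) (s : Equiv.Perm ℕ) (m p : ℕ) : Set V :=
  {v ∈ DeltaO l s | m + p + 2 ≤ rowOf v}

/-- Δ₂^O = {α ∈ Δ^O : col(α) ≤ m+1}. -/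
def DeltaO2 (l : ℕ) (s : Equiv.Perm ℕ) (m : ℕ) : Set V :=
  {v ∈ DeltaO l s | colOf v ≤ m + 1}

/-- Δ₃^O = Δ^O \ (Δ₁^O ∪ Δ₂^O). -/
def DeltaO3 (l : ℕ) (s : Equiv.Perm ℕ) (m p : ℕ) : Set V :=
  DeltaO l s \ (DeltaO1 l s m p ∪ DeltaO2 l s m)

/-- Δ̄_K^k = {α ∈ (Δ̄_K)₊ : s^{−j}α ∈ (Δ̄_K)₊ for 1 ≤ j ≤ k−1 and s^{−k}α ∈ (Δ̄_K)₋}. -/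
def DeltaKk (l : ℕ) (s : Equiv.Perm ℕ) (k : ℕ) : Set V :=
  {v ∈ DeltaKpos l s |
    (∀ j, 1 ≤ j → j ≤ k - 1 → pact (s⁻¹ ^ j) v ∈ DeltaKpos l s) ∧
      pact (s⁻¹ ^ k) v ∈ DeltaKneg l s}

/-- d(α) = min{k ≥ 1 : s^{−k}α ∈ Δ₋}. -/
def dd (l : ℕ) (s : Equiv.Perm ℕ) (v : V) : ℕ :=
  sInf {k | 1 ≤ k ∧ pact (s⁻¹ ^ k) v ∈ DeltaNeg l}

/-- Δ_Z = {e_i − e_j : m+2 ≤ i, j ≤ m+p+1, i ≠ j}. -/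
def DeltaZ (m p : ℕ) : Set V :=
  {v | ∃ i j, m + 2 ≤ i ∧ i ≤ m + p + 1 ∧ m + 2 ≤ j ∧ j ≤ m + p + 1 ∧ i ≠ j ∧ v = rt i j}

/-- The ⟨s⟩-orbit of a vector. -/
def orbitOf (s : Equiv.Perm ℕ) (v : V) : Set V := {w | ∃ n : ℤ, w = pact (s ^ n) v}

/-- The set P_κ (for κ ∈ Δ̄_K^k). -/
def Pk (l : ℕ) (s : Equiv.Perm ℕ) (k : ℕ) (κ : V) : Set (V × V) :=
  {q | (∃ i, 2 ≤ i ∧ i ≤ k - 1 ∧ q.1 ∈ DeltaKk l s i) ∧ q.2 ∈ DeltaKk l s k ∧ κ = q.1 + q.2}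

/-- The set P′_κ (for κ ∈ Δ̄_K^k). -/
def Pk' (l : ℕ) (s : Equiv.Perm ℕ) (k : ℕ) (κ : V) : Set (V × V) :=
  {q | q.1 ∈ DeltaKk l s k ∧ q.2 ∈ DeltaKk l s k ∧ κ = q.1 + q.2}

/-- The eigenvector v^λ of case (i) (m even, l′ = 2m+1 odd). -/
def vlam (m p : ℕ) (lam : ℂ) : ℕ → ℂ := fun j =>
  if j = 0 then 0
  else if j ≤ m + 1 then
    (if j % 2 = 1 then lam ^ ((4 * m + 5 - j) / 2) else lam ^ (j / 2))
  else if j ≤ m + p + 1 then 0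
  else if j ≤ m + p + m + 2 then
    (if (j - (m + p)) % 2 = 0 then lam ^ ((m + (j - (m + p))) / 2)
     else lam ^ ((3 * m + 5 - (j - (m + p))) / 2))
  else 0

/-!
Write `s = s₁ s₂` with `s₁`, `s₂` products of disjoint transpositions, hence involutions. Then
`v ∘ s⁻¹ = λ v` amounts to `v (s₂⁻¹ k) = λ v (s₁ k)` for every index `k`. On the support
`{1, …, m+1} ∪ {m+p+2, …, 2m+p+2}` of `v`, the transpositions of `s₁` and `s₂` (including the
bridge `s_γ = (m+1, m+p+2)`) link the indices into one cycle of length `2m+2`, and along it the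
exponent of `λ` in `v` goes up by one at each step; the cycle closes at `k = 1`, where
`λ^{2m+2} = 1` is needed. Finally `v 1 = λ^{2m+2} = 1`, so `v ≠ 0`.
-/

lemma swapProd_range'_apply (a n j : ℕ) :
    swapProd (List.range' a n 2) j =
      if a ≤ j ∧ j < a + 2 * n then (if (j - a) % 2 = 0 then j + 1 else j - 1) else j := by
  induction n generalizing a with
  | zero => simp [swapProd]
  | succ n ih =>
    have hcons : swapProd (List.range' a (n + 1) 2) =
        Equiv.swap a (a + 1) * swapProd (List.range' (a + 2) n 2) := rfl
    rw [hcons, Equiv.Perm.mul_apply, ih, Equiv.swap_apply_def]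
    split_ifs <;> omega

lemma swapProd_range'_apply_apply (a n j : ℕ) :
    swapProd (List.range' a n 2) (swapProd (List.range' a n 2) j) = j := by
  simp only [swapProd_range'_apply]
  split_ifs <;> omega

lemma swapProd_range'_inv (a n : ℕ) :
    (swapProd (List.range' a n 2))⁻¹ = swapProd (List.range' a n 2) :=
  inv_eq_of_mul_eq_one_right <| Equiv.ext <| swapProd_range'_apply_apply a n

def weylS₁ (m p : ℕ) : Equiv.Perm ℕ :=
  swapProd (List.range' 2 (m / 2) 2) * swapProd (List.range' (m + p + 2) (m / 2) 2)

def weylS₂ (m p : ℕ) : Equiv.Perm ℕ :=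
  swapProd (List.range' 1 (m / 2) 2) * Equiv.swap (m + 1) (m + p + 2) *
    swapProd (List.range' (m + p + 3) (m / 2) 2)

lemma weylS_eq_weylS₁_mul_weylS₂ {l l' m p : ℕ} (hm : m = (l' - 1) / 2) (hp : p = l - l')
    (hme : m % 2 = 0) (hlo : l' % 2 = 1) : weylS l l' = weylS₁ m p * weylS₂ m p := by
  subst hm hp
  simp only [weylS, if_pos hme, if_pos hlo, weylS₁, weylS₂]

lemma weylS₂_inv_apply (m p k : ℕ) :
    (weylS₂ m p)⁻¹ k = swapProd (List.range' (m + p + 3) (m / 2) 2)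
      (Equiv.swap (m + 1) (m + p + 2) (swapProd (List.range' 1 (m / 2) 2) k)) := by
  simp only [weylS₂, mul_inv_rev, swapProd_range'_inv, Equiv.swap_inv, Equiv.Perm.mul_apply]

lemma vlam_one (m p : ℕ) (lam : ℂ) : vlam m p lam 1 = lam ^ (2 * m + 2) := by
  simp only [vlam, one_ne_zero, ↓reduceIte, Nat.le_add_left, Nat.one_mod]
  congr 1
  omega

set_option maxHeartbeats 600000 in
lemma vlam_weylS₂_inv_apply {m : ℕ} (p : ℕ) (hm2 : 2 ≤ m) (hme : m % 2 = 0) {lam : ℂ}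
    (hroot : lam ^ (2 * m + 2) = 1) (k : ℕ) :
    vlam m p lam ((weylS₂ m p)⁻¹ k) = lam * vlam m p lam (weylS₁ m p k) := by
  have hregion : k = 1 ∨ k = 0 ∨ (k % 2 = 1 ∧ 3 ≤ k ∧ k < m) ∨ (k % 2 = 0 ∧ 2 ≤ k ∧ k ≤ m) ∨
      k = m + 1 ∨ (m + 2 ≤ k ∧ k ≤ m + p + 1) ∨ k = m + p + 2 ∨
      ((k - (m + p)) % 2 = 1 ∧ m + p + 3 ≤ k ∧ k ≤ m + p + m + 1) ∨
      ((k - (m + p)) % 2 = 0 ∧ m + p + 4 ≤ k ∧ k ≤ m + p + m) ∨ k = m + p + m + 2 ∨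
      m + p + m + 3 ≤ k := by
    omega
  rcases hregion with hk | hk | hk | hk | hk | hk | hk | hk | hk | hk | hk <;>
    simp (disch := omega) only [weylS₂_inv_apply, weylS₁, Equiv.Perm.mul_apply,
      swapProd_range'_apply, Equiv.swap_apply_def, vlam, if_pos, if_neg]
  · -- `k = 1`, where the cycle closes
    rw [show (4 * m + 5 - k) / 2 = 2 * m + 2 by omega, hroot, show (k + 1) / 2 = 1 by omega,
      pow_one, mul_one]
  all_goals first
    | exact (mul_zero lam).symm
    | (rw [← pow_succ']; exact congrArg (lam ^ ·) (by omega))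

theorem stmt1_general (l l' m p : ℕ) (h5 : 5 ≤ l')
    (hm : m = (l' - 1) / 2) (hp : p = l - l')
    (hme : m % 2 = 0) (hlo : l' % 2 = 1)
    (lam : ℂ) (hroot : lam ^ (2 * m + 2) = 1) :
    vlam m p lam ≠ 0 ∧
      ∀ j, 1 ≤ j → j ≤ l + 1 →
        vlam m p lam ((weylS l l')⁻¹ j) = lam * vlam m p lam j := by
  have hm2 : 2 ≤ m := by omega
  refine ⟨fun hzero => ?_, fun j _ _ => ?_⟩
  · have hv1 : vlam m p lam 1 = 1 := (vlam_one m p lam).trans hroot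
    exact one_ne_zero (hv1.symm.trans (congrFun hzero 1))
  · rw [weylS_eq_weylS₁_mul_weylS₂ hm hp hme hlo, mul_inv_rev, Equiv.Perm.mul_apply,
      vlam_weylS₂_inv_apply p hm2 hme hroot, Equiv.Perm.inv_def, Equiv.apply_symm_apply]

/-- in case (i) (m even, l′ = 2m+1 odd), for any λ with λ^{2m+2} = 1 and
λ ≠ 1, the vector v^λ is a nonzero λ-eigenvector for the permutation action of s. -/
theorem stmt1 (l l' m p : ℕ) (h5 : 5 ≤ l') (hll : l' ≤ l)
    (hm : m = (l' - 1) / 2) (hp : p = l - l')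
    (hme : m % 2 = 0) (hlo : l' % 2 = 1)
    (lam : ℂ) (hroot : lam ^ (2 * m + 2) = 1) (hne : lam ≠ 1) :
    vlam m p lam ≠ 0 ∧
      ∀ j, 1 ≤ j → j ≤ l + 1 →
        vlam m p lam ((weylS l l')⁻¹ j) = lam * vlam m p lam j :=
  stmt1_general l l' m p h5 hm hp hme hlo lam hroot
end DPW
end
end

section
/- Assume m is even and l′ = 2m+1 is odd (case (i)), set λ = e^{πi/(m+1)}, and let v = v^λ ∈ ℂ^{l+1} be as defined in the context. For each k ∈ {1, …, m+1} ∪ {m+p+1, m+p+2, …, m+p+m+1} (the indices of the simple roots not fixed by s) set w_k = v_k − v_{k+1}. Then every w_k is nonzero, Re(w_k) ≥ 0 for every such k, and all those w_k with Re(w_k) = 0 are purely imaginary numbers whose imaginary parts have one and the same sign (so all the w_k lie in a common half-plane of ℂ with at most one boundary ray occupied). -/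
/- Common framework: type A_l root system realized in ℝ^{ℕ} (coordinates 1,…,l+1 used),
   the Weyl group as permutations of ℕ acting by permuting coordinates, and the
   Weyl group element s = s₁s₂ of Proposition 4.2 (all four parity cases). -/

noncomputable section

namespace DPW

/-! ### Auxiliary lemmas for Statement 2 -/

private lemma vlam_first (m p : ℕ) (lam : ℂ) (j : ℕ) (h1 : 1 ≤ j) (h2 : j ≤ m + 1) :
    vlam m p lam j =
      if j % 2 = 1 then lam ^ ((4 * m + 5 - j) / 2) else lam ^ (j / 2) := by
  unfold vlam
  rw [if_neg (by omega), if_pos h2]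

private lemma vlam_mid (m p : ℕ) (lam : ℂ) (j : ℕ) (h1 : m + 2 ≤ j) (h2 : j ≤ m + p + 1) :
    vlam m p lam j = 0 := by
  unfold vlam
  rw [if_neg (by omega), if_neg (by omega), if_pos h2]

private lemma vlam_second (m p : ℕ) (lam : ℂ) (j : ℕ) (h1 : m + p + 2 ≤ j)
    (h2 : j ≤ m + p + m + 2) :
    vlam m p lam j =
      if (j - (m + p)) % 2 = 0 then lam ^ ((m + (j - (m + p))) / 2)
      else lam ^ ((3 * m + 5 - (j - (m + p))) / 2) := by
  unfold vlam
  rw [if_neg (by omega), if_neg (by omega), if_neg (by omega), if_pos h2]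

private lemma lam_pow (m n : ℕ) :
    Complex.exp ((Real.pi : ℂ) * Complex.I / ((m : ℂ) + 1)) ^ n
      = Complex.exp ((((n : ℝ) * (Real.pi / ((m : ℝ) + 1)) : ℝ) : ℂ) * Complex.I) := by
  rw [← Complex.exp_nat_mul]
  congr 1
  push_cast
  ring

private lemma lam_pow_re (m n : ℕ) :
    (Complex.exp ((Real.pi : ℂ) * Complex.I / ((m : ℂ) + 1)) ^ n).re
      = Real.cos ((n : ℝ) * (Real.pi / ((m : ℝ) + 1))) := by
  rw [lam_pow]
  exact Complex.exp_ofReal_mul_I_re _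

private lemma lam_pow_im (m n : ℕ) :
    (Complex.exp ((Real.pi : ℂ) * Complex.I / ((m : ℂ) + 1)) ^ n).im
      = Real.sin ((n : ℝ) * (Real.pi / ((m : ℝ) + 1))) := by
  rw [lam_pow]
  exact Complex.exp_ofReal_mul_I_im _

private lemma angle_flip (m a : ℕ) (ha : a ≤ 2 * m + 2) :
    ((2 * m + 2 - a : ℕ) : ℝ) * (Real.pi / ((m : ℝ) + 1))
      = 2 * Real.pi - (a : ℝ) * (Real.pi / ((m : ℝ) + 1)) := by
  have h1 : ((2 * m + 2 - a : ℕ) : ℝ) = 2 * (m : ℝ) + 2 - (a : ℝ) := by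
    push_cast [ha]
    ring
  have hm : ((m : ℝ) + 1) ≠ 0 := by positivity
  rw [h1]
  field_simp

private lemma mul_theta_lt (m a : ℕ) (h : a < m + 1) :
    (a : ℝ) * (Real.pi / ((m : ℝ) + 1)) < Real.pi := by
  have h1 : (a : ℝ) < (m : ℝ) + 1 := by exact_mod_cast h
  have h2 : (0 : ℝ) < Real.pi / ((m : ℝ) + 1) := by positivity
  have hm : ((m : ℝ) + 1) ≠ 0 := by positivity
  calc (a : ℝ) * (Real.pi / ((m : ℝ) + 1))
      < ((m : ℝ) + 1) * (Real.pi / ((m : ℝ) + 1)) := mul_lt_mul_of_pos_right h1 h2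
    _ = Real.pi := by field_simp

private lemma mul_theta_le (m a : ℕ) (h : a ≤ m + 1) :
    (a : ℝ) * (Real.pi / ((m : ℝ) + 1)) ≤ Real.pi := by
  have h1 : (a : ℝ) ≤ (m : ℝ) + 1 := by exact_mod_cast h
  have h2 : (0 : ℝ) < Real.pi / ((m : ℝ) + 1) := by positivity
  have hm : ((m : ℝ) + 1) ≠ 0 := by positivity
  calc (a : ℝ) * (Real.pi / ((m : ℝ) + 1))
      ≤ ((m : ℝ) + 1) * (Real.pi / ((m : ℝ) + 1)) := mul_le_mul_of_nonneg_right h1 h2.le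
    _ = Real.pi := by field_simp

private lemma shape1 (m a : ℕ) (h1 : 1 ≤ a) (h2 : a ≤ m) :
    Real.cos (((2 * m + 2 - a : ℕ) : ℝ) * (Real.pi / ((m : ℝ) + 1)))
        = Real.cos ((a : ℝ) * (Real.pi / ((m : ℝ) + 1)))
      ∧ Real.sin (((2 * m + 2 - a : ℕ) : ℝ) * (Real.pi / ((m : ℝ) + 1)))
        = -Real.sin ((a : ℝ) * (Real.pi / ((m : ℝ) + 1))) := by
  rw [angle_flip m a (by omega), Real.cos_two_pi_sub, Real.sin_two_pi_sub]
  exact ⟨rfl, rfl⟩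

private lemma sin_pos_aux (m a : ℕ) (h1 : 1 ≤ a) (h2 : a ≤ m) :
    0 < Real.sin ((a : ℝ) * (Real.pi / ((m : ℝ) + 1))) := by
  apply Real.sin_pos_of_pos_of_lt_pi
  · have ha : (0 : ℝ) < (a : ℝ) := by exact_mod_cast h1
    have h2' : (0 : ℝ) < Real.pi / ((m : ℝ) + 1) := by positivity
    exact mul_pos ha h2'
  · exact mul_theta_lt m a (by omega)

private lemma shape2 (m t : ℕ) (h2 : t ≤ m) :
    Real.cos (((t + 1 : ℕ) : ℝ) * (Real.pi / ((m : ℝ) + 1)))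
      < Real.cos (((2 * m + 2 - t : ℕ) : ℝ) * (Real.pi / ((m : ℝ) + 1))) := by
  rw [angle_flip m t (by omega), Real.cos_two_pi_sub]
  apply Real.cos_lt_cos_of_nonneg_of_le_pi
  · positivity
  · exact mul_theta_le m (t + 1) (by omega)
  · have h1 : (t : ℝ) < ((t + 1 : ℕ) : ℝ) := by exact_mod_cast Nat.lt_succ_self t
    have h2' : (0 : ℝ) < Real.pi / ((m : ℝ) + 1) := by positivity
    exact mul_lt_mul_of_pos_right h1 h2'

private lemma cos_c_pos (m q : ℕ) (hm : m = 2 * q) (hq : 1 ≤ q) :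
    0 < Real.cos (((3 * q + 2 : ℕ) : ℝ) * (Real.pi / ((m : ℝ) + 1))) := by
  subst hm
  rw [← Real.cos_sub_two_pi]
  apply Real.cos_pos_of_mem_Ioo
  have hq' : (1 : ℝ) ≤ (q : ℝ) := by exact_mod_cast hq
  have hd : ((2 * q : ℕ) : ℝ) + 1 = 2 * (q : ℝ) + 1 := by push_cast; ring
  rw [hd]
  have hθ : (0 : ℝ) < Real.pi / (2 * (q : ℝ) + 1) := by positivity
  have hπ : Real.pi = (Real.pi / (2 * (q : ℝ) + 1)) * (2 * (q : ℝ) + 1) := by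
    field_simp
  have hc : ((3 * q + 2 : ℕ) : ℝ) = 3 * (q : ℝ) + 2 := by push_cast; ring
  have hqθ : (0 : ℝ) < (q : ℝ) * (Real.pi / (2 * (q : ℝ) + 1)) := by
    apply mul_pos _ hθ
    exact_mod_cast hq
  rw [hc]
  constructor
  · nlinarith [hθ, hπ, hqθ]
  · nlinarith [hθ, hπ, hqθ]

private lemma cos_d_neg (m q : ℕ) (hm : m = 2 * q) (hq : 1 ≤ q) :
    Real.cos (((q + 1 : ℕ) : ℝ) * (Real.pi / ((m : ℝ) + 1))) < 0 := by
  subst hm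
  apply Real.cos_neg_of_pi_div_two_lt_of_lt
  all_goals
    have hq' : (1 : ℝ) ≤ (q : ℝ) := by exact_mod_cast hq
    have hd : ((2 * q : ℕ) : ℝ) + 1 = 2 * (q : ℝ) + 1 := by push_cast; ring
    rw [hd]
    have hθ : (0 : ℝ) < Real.pi / (2 * (q : ℝ) + 1) := by positivity
    have hπ : Real.pi = (Real.pi / (2 * (q : ℝ) + 1)) * (2 * (q : ℝ) + 1) := by
      field_simp
    have hc : ((q + 1 : ℕ) : ℝ) = (q : ℝ) + 1 := by push_cast; ring
    have hqθ : (0 : ℝ) < (q : ℝ) * (Real.pi / (2 * (q : ℝ) + 1)) := by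
      apply mul_pos _ hθ
      exact_mod_cast hq
    rw [hc]
    nlinarith [hθ, hπ, hqθ]

private lemma key (m p : ℕ) (hm2 : 2 ≤ m) (hme : m % 2 = 0) (k : ℕ)
    (hk : (1 ≤ k ∧ k ≤ m + 1) ∨ (m + p + 1 ≤ k ∧ k ≤ m + p + m + 1)) :
    0 < (vlam m p (Complex.exp ((Real.pi : ℂ) * Complex.I / ((m : ℂ) + 1))) k
          - vlam m p (Complex.exp ((Real.pi : ℂ) * Complex.I / ((m : ℂ) + 1))) (k + 1)).re
      ∨ ((vlam m p (Complex.exp ((Real.pi : ℂ) * Complex.I / ((m : ℂ) + 1))) k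
          - vlam m p (Complex.exp ((Real.pi : ℂ) * Complex.I / ((m : ℂ) + 1))) (k + 1)).re = 0
        ∧ 0 < (vlam m p (Complex.exp ((Real.pi : ℂ) * Complex.I / ((m : ℂ) + 1))) k
          - vlam m p (Complex.exp ((Real.pi : ℂ) * Complex.I / ((m : ℂ) + 1))) (k + 1)).im) := by
  set lam := Complex.exp ((Real.pi : ℂ) * Complex.I / ((m : ℂ) + 1)) with hlam
  obtain ⟨q, hq⟩ : ∃ q, m = 2 * q := ⟨m / 2, by omega⟩
  have hq1 : 1 ≤ q := by omega
  by_cases hA : k ≤ m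
  · -- first block, k ≤ m
    have hk1 : 1 ≤ k := by omega
    rcases Nat.even_or_odd k with hke | hko
    · -- k even : shape 1
      obtain ⟨r, hr⟩ : ∃ r, k = 2 * r := by
        rcases hke with ⟨r, hr⟩; exact ⟨r, by omega⟩
      have hr1 : 1 ≤ r := by omega
      have hrq : r ≤ q := by omega
      have e1 : vlam m p lam k = lam ^ r := by
        rw [vlam_first m p lam k (by omega) (by omega), if_neg (by omega)]
        congr 1; omega
      have e2 : vlam m p lam (k + 1) = lam ^ (2 * m + 2 - r) := by
        rw [vlam_first m p lam (k + 1) (by omega) (by omega), if_pos (by omega)]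
        congr 1; omega
      right
      rw [e1, e2, Complex.sub_re, Complex.sub_im, lam_pow_re, lam_pow_re, lam_pow_im,
        lam_pow_im]
      obtain ⟨hc, hs⟩ := shape1 m r hr1 (by omega)
      refine ⟨by rw [hc]; ring, ?_⟩
      rw [hs]
      have := sin_pos_aux m r hr1 (by omega)
      linarith
    · -- k odd : shape 2
      obtain ⟨t, ht⟩ : ∃ t, k = 2 * t + 1 := by
        rcases hko with ⟨t, htt⟩; exact ⟨t, by omega⟩
      have e1 : vlam m p lam k = lam ^ (2 * m + 2 - t) := by
        rw [vlam_first m p lam k (by omega) (by omega), if_pos (by omega)]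
        congr 1; omega
      have e2 : vlam m p lam (k + 1) = lam ^ (t + 1) := by
        rw [vlam_first m p lam (k + 1) (by omega) (by omega), if_neg (by omega)]
        congr 1; omega
      left
      rw [e1, e2, Complex.sub_re, lam_pow_re, lam_pow_re]
      have := shape2 m t (by omega)
      linarith
  · by_cases hB : k = m + 1
    · -- k = m + 1
      subst hB
      have e1 : vlam m p lam (m + 1) = lam ^ (3 * q + 2) := by
        rw [vlam_first m p lam (m + 1) (by omega) (by omega), if_pos (by omega)]
        congr 1; omega
      left
      by_cases hp : p = 0
      · subst hp
        have e2 : vlam m 0 lam (m + 1 + 1) = lam ^ (q + 1) := by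
          rw [vlam_second m 0 lam (m + 1 + 1) (by omega) (by omega), if_pos (by omega)]
          congr 1; omega
        rw [e1, e2, Complex.sub_re, lam_pow_re, lam_pow_re]
        have h1 := cos_c_pos m q hq hq1
        have h2 := cos_d_neg m q hq hq1
        linarith
      · have e2 : vlam m p lam (m + 1 + 1) = 0 := by
          exact vlam_mid m p lam (m + 1 + 1) (by omega) (by omega)
        rw [e1, e2, sub_zero, lam_pow_re]
        exact cos_c_pos m q hq hq1
    · -- second block : k ≥ m + p + 1 and k ≥ m + 2
      have hk2 : m + p + 1 ≤ k ∧ k ≤ m + p + m + 1 := by omega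
      by_cases hC : k = m + p + 1
      · -- k = m + p + 1, with p ≥ 1 (else k = m+1, excluded)
        have hp1 : 1 ≤ p := by omega
        have e1 : vlam m p lam k = 0 := vlam_mid m p lam k (by omega) (by omega)
        have e2 : vlam m p lam (k + 1) = lam ^ (q + 1) := by
          rw [vlam_second m p lam (k + 1) (by omega) (by omega), if_pos (by omega)]
          congr 1; omega
        left
        rw [e1, e2, zero_sub, Complex.neg_re, lam_pow_re]
        have := cos_d_neg m q hq hq1
        linarith
      · -- k = m + p + i with 2 ≤ i ≤ m + 1
        have hi2 : m + p + 2 ≤ k := by omega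
        rcases Nat.even_or_odd (k - (m + p)) with hke | hko
        · -- i even : i = 2r, 1 ≤ r ≤ q ; shape 1 with a = q + r
          obtain ⟨r, hr⟩ : ∃ r, k = m + p + 2 * r := by
            rcases hke with ⟨r, hr⟩; exact ⟨r, by omega⟩
          have hr1 : 1 ≤ r := by omega
          have hrq : r ≤ q := by omega
          have e1 : vlam m p lam k = lam ^ (q + r) := by
            rw [vlam_second m p lam k (by omega) (by omega), if_pos (by omega)]
            congr 1; omega
          have e2 : vlam m p lam (k + 1) = lam ^ (2 * m + 2 - (q + r)) := by
            rw [vlam_second m p lam (k + 1) (by omega) (by omega), if_neg (by omega)]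
            congr 1; omega
          right
          rw [e1, e2, Complex.sub_re, Complex.sub_im, lam_pow_re, lam_pow_re, lam_pow_im,
            lam_pow_im]
          obtain ⟨hc, hs⟩ := shape1 m (q + r) (by omega) (by omega)
          refine ⟨by rw [hc]; ring, ?_⟩
          rw [hs]
          have := sin_pos_aux m (q + r) (by omega) (by omega)
          linarith
        · -- i odd : i = 2r + 1, 1 ≤ r ≤ q ; shape 2 with t = q + r
          obtain ⟨r, hr⟩ : ∃ r, k = m + p + (2 * r + 1) := by
            rcases hko with ⟨r, hr⟩; exact ⟨r, by omega⟩
          have hr1 : 1 ≤ r := by omega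
          have hrq : r ≤ q := by omega
          have e1 : vlam m p lam k = lam ^ (2 * m + 2 - (q + r)) := by
            rw [vlam_second m p lam k (by omega) (by omega), if_neg (by omega)]
            congr 1; omega
          have e2 : vlam m p lam (k + 1) = lam ^ ((q + r) + 1) := by
            rw [vlam_second m p lam (k + 1) (by omega) (by omega), if_pos (by omega)]
            congr 1; omega
          left
          rw [e1, e2, Complex.sub_re, lam_pow_re, lam_pow_re]
          have := shape2 m (q + r) (by omega)
          linarith

/-- in case (i) with λ = e^{πi/(m+1)}, the numbers w_k = v_k − v_{k+1}
(for the indices k of the simple roots not fixed by s) are nonzero, have nonnegative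
real part, and those with zero real part are purely imaginary with imaginary parts of
one and the same sign. -/
theorem stmt2 (l l' m p : ℕ) (h5 : 5 ≤ l') (hll : l' ≤ l)
    (hm : m = (l' - 1) / 2) (hp : p = l - l')
    (hme : m % 2 = 0) (hlo : l' % 2 = 1) :
    let lam : ℂ := Complex.exp ((Real.pi : ℂ) * Complex.I / ((m : ℂ) + 1))
    let w : ℕ → ℂ := fun k => vlam m p lam k - vlam m p lam (k + 1)
    let K : Set ℕ := {k | (1 ≤ k ∧ k ≤ m + 1) ∨ (m + p + 1 ≤ k ∧ k ≤ m + p + m + 1)}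
    (∀ k ∈ K, w k ≠ 0 ∧ 0 ≤ (w k).re) ∧
      (∀ k ∈ K, ∀ k' ∈ K, (w k).re = 0 → (w k').re = 0 → 0 < (w k).im * (w k').im) := by
  intro lam w K
  have hm2 : 2 ≤ m := by omega
  have key' : ∀ k ∈ K, 0 < (w k).re ∨ ((w k).re = 0 ∧ 0 < (w k).im) := by
    intro k hk
    exact key m p hm2 hme k hk
  constructor
  · intro k hk
    rcases key' k hk with h | ⟨h1, h2⟩
    · refine ⟨fun h0 => ?_, h.le⟩
      rw [h0] at h
      simp at h
    · refine ⟨fun h0 => ?_, h1.symm.le⟩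
      rw [h0] at h2
      simp at h2
  · intro k hk k' hk' h h'
    rcases key' k hk with h1 | ⟨_, h2⟩
    · linarith
    rcases key' k' hk' with h1' | ⟨_, h2'⟩
    · linarith
    exact mul_pos h2 h2'
end DPW
end
end

section
/- Assume m and l′ are both even (case (ii)). Then the set Δ_{s^{−1}} = {α ∈ Δ₊ : s^{−1}α ∈ Δ₋} consists exactly of the following roots: α_1 + α_2; the roots α_{2t} + α_{2t+1} + α_{2t+2} for 1 ≤ t ≤ (m−2)/2; the roots α_m + α_{m+1} + ⋯ + α_{m+q} for 1 ≤ q ≤ p; the root γ′ = α_m + ⋯ + α_{m+p+2}; the roots α_i + α_{i+1} + ⋯ + α_{m+p+2} for m+2 ≤ i ≤ m+p+2; the roots α_{m+p+2t} + α_{m+p+2t+1} + α_{m+p+2t+2} for 1 ≤ t ≤ m/2; and the simple roots α_2, α_4, …, α_m and α_{m+p+2}, α_{m+p+4}, …, α_{m+p+m+2}. -/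
/- Common framework: type A_l root system realized in ℝ^{ℕ} (coordinates 1,…,l+1 used),
   the Weyl group as permutations of ℕ acting by permuting coordinates, and the
   Weyl group element s = s₁s₂ of Proposition 4.2 (all four parity cases). -/

noncomputable section

namespace DPW

/-!
Since `pact σ (e_i - e_j) = e_{σ i} - e_{σ j}`, the set `Δ_{σ⁻¹}` consists of the roots
`e_i - e_j` with `i < j` and `σ⁻¹ j < σ⁻¹ i`: it is read off from the inversions of the
permutation `σ⁻¹` of `{1, …, l + 1}`. In case (ii) we have `l' = 2m + 2`, `l + 1 = 2m + p + 3`,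
and each factor of `s` is a product of disjoint adjacent transpositions, so `s⁻¹` has an
explicit piecewise-affine description; its inversions are then listed by a finite case analysis
on the pieces.
-/

theorem pact_rt (σ : Equiv.Perm ℕ) (i j : ℕ) : pact σ (rt i j) = rt (σ i) (σ j) := by
  funext k
  simp only [pact, rt, evec, Pi.sub_apply, Equiv.Perm.inv_eq_iff_eq, @eq_comm _ k]

theorem neg_rt (i j : ℕ) : -rt i j = rt j i := by
  simp only [rt, neg_sub]

theorem eq_of_rt_eq {i j a b : ℕ} (hab : a ≠ b) (h : rt i j = rt a b) : i = a ∧ j = b := by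
  have ha := congrFun h a
  have hb := congrFun h b
  simp only [rt, evec, Pi.sub_apply] at ha hb
  split_ifs at ha hb <;> grind

theorem rt_mem_DeltaPos_iff {l i j : ℕ} : rt i j ∈ DeltaPos l ↔ 1 ≤ i ∧ i < j ∧ j ≤ l + 1 := by
  constructor
  · rintro ⟨a, b, ha, hab, hb, h⟩
    obtain ⟨rfl, rfl⟩ := eq_of_rt_eq hab.ne h
    exact ⟨ha, hab, hb⟩
  · rintro ⟨hi, hij, hj⟩
    exact ⟨i, j, hi, hij, hj, rfl⟩

theorem rt_mem_DeltaNeg_iff {l i j : ℕ} : rt i j ∈ DeltaNeg l ↔ 1 ≤ j ∧ j < i ∧ i ≤ l + 1 := by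
  rw [DeltaNeg, Set.mem_ofPred_eq, neg_rt, rt_mem_DeltaPos_iff]

theorem rt_mem_DeltaSinv_iff {l i j : ℕ} {σ : Equiv.Perm ℕ} :
    rt i j ∈ DeltaSinv l σ ↔
      (1 ≤ i ∧ i < j ∧ j ≤ l + 1) ∧ (1 ≤ σ⁻¹ j ∧ σ⁻¹ j < σ⁻¹ i ∧ σ⁻¹ i ≤ l + 1) := by
  rw [DeltaSinv, Set.mem_ofPred_eq, pact_rt, rt_mem_DeltaPos_iff, rt_mem_DeltaNeg_iff]

def pairSwap (a n x : ℕ) : ℕ :=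
  if a ≤ x ∧ x < a + 2 * n then (if (x - a) % 2 = 0 then x + 1 else x - 1) else x

section pairSwap

variable {a n x : ℕ}

theorem pairSwap_of_lt (h : x < a) : pairSwap a n x = x := by
  simp only [pairSwap]; split_ifs <;> omega

theorem pairSwap_of_ge (h : a + 2 * n ≤ x) : pairSwap a n x = x := by
  simp only [pairSwap]; split_ifs <;> omega

theorem pairSwap_of_even (h₁ : a ≤ x) (h₂ : x < a + 2 * n) (h : (x - a) % 2 = 0) :
    pairSwap a n x = x + 1 := by
  simp only [pairSwap]; split_ifs <;> omega

theorem pairSwap_of_odd (h₁ : a ≤ x) (h₂ : x < a + 2 * n) (h : (x - a) % 2 = 1) :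
    pairSwap a n x = x - 1 := by
  simp only [pairSwap]; split_ifs <;> omega

end pairSwap

theorem swapProd_range'_apply_s4 (a n x : ℕ) : swapProd (List.range' a n 2) x = pairSwap a n x := by
  induction n generalizing a with
  | zero => simp [swapProd, pairSwap]
  | succ n ih =>
    rw [List.range'_succ, swapProd, List.map_cons, List.prod_cons, ← swapProd,
      Equiv.Perm.mul_apply, ih, Equiv.swap_apply_def]
    simp only [pairSwap]
    split_ifs <;> omega

theorem swap_apply_of_eq_left {α : Type*} [DecidableEq α] {a b x : α} (h : x = a) :
    Equiv.swap a b x = b := by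
  rw [h, Equiv.swap_apply_left]

theorem swap_apply_of_eq_right {α : Type*} [DecidableEq α] {a b x : α} (h : x = b) :
    Equiv.swap a b x = a := by
  rw [h, Equiv.swap_apply_right]

theorem weylS_caseII_apply (m p x : ℕ) (hme : m % 2 = 0) :
    weylS (2 * m + 2 + p) (2 * m + 2) x =
      pairSwap 2 (m / 2) (pairSwap (m + p + 2) (m / 2 + 1) (pairSwap 1 (m / 2)
        (Equiv.swap (m + 1) (m + p + 2) (pairSwap (m + p + 3) (m / 2) x)))) := by
  have hm : (2 * m + 2 - 1) / 2 = m := by omega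
  have hp : 2 * m + 2 + p - (2 * m + 2) = p := by omega
  have hl' : (2 * m + 2) % 2 ≠ 1 := by omega
  simp only [weylS, hm, hp, hme, hl', if_true, if_false, Equiv.Perm.mul_apply,
    swapProd_range'_apply_s4]

def weylSInvII (m p x : ℕ) : ℕ :=
  if x = 1 then 2
  else if x = m then m + p + 2
  else if x ≤ m + 1 then (if x % 2 = 1 then x - 2 else x + 2)
  else if x ≤ m + p + 1 then x
  else if x = m + p + 3 then m + 1
  else if x = m + p + m + 2 then m + p + m + 3
  else if x ≤ m + p + m + 3 then (if (x + m + p) % 2 = 0 then x + 2 else x - 2)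
  else x

theorem weylSInvII_cases {m p x : ℕ} (hme : m % 2 = 0) (hx₁ : 1 ≤ x) (hx₂ : x ≤ 2 * m + p + 3) :
    (x = 1 ∧ weylSInvII m p x = 2) ∨
    (x = m ∧ weylSInvII m p x = m + p + 2) ∨
    (3 ≤ x ∧ x ≤ m + 1 ∧ x % 2 = 1 ∧ weylSInvII m p x = x - 2) ∨
    (2 ≤ x ∧ x + 2 ≤ m ∧ x % 2 = 0 ∧ weylSInvII m p x = x + 2) ∨
    (m + 2 ≤ x ∧ x ≤ m + p + 1 ∧ weylSInvII m p x = x) ∨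
    (x = m + p + 3 ∧ weylSInvII m p x = m + 1) ∨
    (x = 2 * m + p + 2 ∧ weylSInvII m p x = 2 * m + p + 3) ∨
    (m + p + 2 ≤ x ∧ x ≤ 2 * m + p ∧ (x + m + p) % 2 = 0 ∧ weylSInvII m p x = x + 2) ∨
    (m + p + 5 ≤ x ∧ (x + m + p) % 2 = 1 ∧ weylSInvII m p x = x - 2) := by
  simp only [weylSInvII]
  split_ifs <;> grind

theorem weylS_caseII_inv_apply {m p x : ℕ} (hme : m % 2 = 0) (hm : 2 ≤ m)
    (hx₁ : 1 ≤ x) (hx₂ : x ≤ 2 * m + p + 3) :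
    (weylS (2 * m + 2 + p) (2 * m + 2))⁻¹ x = weylSInvII m p x := by
  rw [Equiv.Perm.inv_eq_iff_eq, weylS_caseII_apply m p _ hme]
  simp only [weylSInvII]
  split_ifs <;>
    simp (disch := omega) only [pairSwap_of_lt, pairSwap_of_ge, pairSwap_of_even, pairSwap_of_odd,
      swap_apply_of_eq_left, swap_apply_of_eq_right, Equiv.swap_apply_of_ne_of_ne] <;>
    omega

theorem rt_mem_DeltaSinv_weylS_caseII_iff {m p i j : ℕ} (hme : m % 2 = 0) (hm : 2 ≤ m) :
    rt i j ∈ DeltaSinv (2 * m + 2 + p) (weylS (2 * m + 2 + p) (2 * m + 2)) ↔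
      (1 ≤ i ∧ i < j ∧ j ≤ 2 * m + 2 + p + 1) ∧
      ((i = 1 ∧ j = 3) ∨
        (i % 2 = 0 ∧ 2 ≤ i ∧ i + 2 ≤ m ∧ j = i + 3) ∨
        (i = m ∧ m + 2 ≤ j ∧ j ≤ m + p + 1) ∨
        (i = m ∧ j = m + p + 3) ∨
        (m + 2 ≤ i ∧ i ≤ m + p + 2 ∧ j = m + p + 3) ∨
        ((i + m + p) % 2 = 0 ∧ m + p + 2 ≤ i ∧ i ≤ m + p + m ∧ j = i + 3) ∨
        (i % 2 = 0 ∧ 2 ≤ i ∧ i ≤ m ∧ j = i + 1) ∨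
        ((i + m + p) % 2 = 0 ∧ m + p + 2 ≤ i ∧ i ≤ m + p + m + 2 ∧ j = i + 1)) := by
  rw [rt_mem_DeltaSinv_iff]
  refine and_congr_right fun ⟨hi, hij, hj⟩ => ?_
  rw [weylS_caseII_inv_apply hme hm hi (by omega), weylS_caseII_inv_apply hme hm (by omega) (by omega)]
  rcases weylSInvII_cases (p := p) hme hi (by omega) with
    ⟨_, gi⟩ | ⟨_, gi⟩ | ⟨_, _, _, gi⟩ | ⟨_, _, _, gi⟩ | ⟨_, _, gi⟩ | ⟨_, gi⟩ | ⟨_, gi⟩ |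
      ⟨_, _, _, gi⟩ | ⟨_, _, gi⟩ <;>
  rcases weylSInvII_cases (p := p) hme (x := j) (by omega) (by omega) with
    ⟨_, gj⟩ | ⟨_, gj⟩ | ⟨_, _, _, gj⟩ | ⟨_, _, _, gj⟩ | ⟨_, _, gj⟩ | ⟨_, gj⟩ | ⟨_, gj⟩ |
      ⟨_, _, _, gj⟩ | ⟨_, _, gj⟩ <;>
  rw [gi, gj] <;> grind

/-- explicit description of Δ_{s⁻¹} in case (ii) (m even, l′ even). -/
theorem stmt4 (l l' m p : ℕ) (h5 : 5 ≤ l') (hll : l' ≤ l)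
    (hm : m = (l' - 1) / 2) (hp : p = l - l')
    (hme : m % 2 = 0) (hle : l' % 2 = 0) :
    DeltaSinv l (weylS l l') =
      {v | v = rt 1 3 ∨
        (∃ t, 1 ≤ t ∧ t ≤ (m - 2) / 2 ∧ v = rt (2 * t) (2 * t + 3)) ∨
        (∃ q, 1 ≤ q ∧ q ≤ p ∧ v = rt m (m + q + 1)) ∨
        v = rt m (m + p + 3) ∨
        (∃ i, m + 2 ≤ i ∧ i ≤ m + p + 2 ∧ v = rt i (m + p + 3)) ∨
        (∃ t, 1 ≤ t ∧ t ≤ m / 2 ∧ v = rt (m + p + 2 * t) (m + p + 2 * t + 3)) ∨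
        (∃ t, 1 ≤ t ∧ t ≤ m / 2 ∧ v = rt (2 * t) (2 * t + 1)) ∨
        (∃ t, 1 ≤ t ∧ t ≤ m / 2 + 1 ∧ v = rt (m + p + 2 * t) (m + p + 2 * t + 1))} := by
  obtain ⟨rfl, rfl⟩ : l' = 2 * m + 2 ∧ l = 2 * m + 2 + p := by omega
  have hm2 : 2 ≤ m := by omega
  ext v
  constructor
  · intro hv
    obtain ⟨i, j, -, -, -, rfl⟩ := hv.1
    obtain ⟨-, h | h | h | h | h | h | h | h⟩ := (rt_mem_DeltaSinv_weylS_caseII_iff hme hm2).1 hv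
    · exact Or.inl (by congr 1 <;> omega)
    · exact Or.inr <| Or.inl ⟨i / 2, by omega, by omega, by congr 1 <;> omega⟩
    · exact Or.inr <| Or.inr <| Or.inl ⟨j - m - 1, by omega, by omega, by congr 1 <;> omega⟩
    · exact Or.inr <| Or.inr <| Or.inr <| Or.inl (by congr 1 <;> omega)
    · exact Or.inr <| Or.inr <| Or.inr <| Or.inr <| Or.inl ⟨i, by omega, by omega, by congr 1; omega⟩
    · exact Or.inr <| Or.inr <| Or.inr <| Or.inr <| Or.inr <| Or.inl
        ⟨(i - m - p) / 2, by omega, by omega, by congr 1 <;> omega⟩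
    · exact Or.inr <| Or.inr <| Or.inr <| Or.inr <| Or.inr <| Or.inr <| Or.inl
        ⟨i / 2, by omega, by omega, by congr 1 <;> omega⟩
    · exact Or.inr <| Or.inr <| Or.inr <| Or.inr <| Or.inr <| Or.inr <| Or.inr
        ⟨(i - m - p) / 2, by omega, by omega, by congr 1 <;> omega⟩
  · rintro (rfl | ⟨t, _, _, rfl⟩ | ⟨t, _, _, rfl⟩ | rfl | ⟨t, _, _, rfl⟩ | ⟨t, _, _, rfl⟩ |
      ⟨t, _, _, rfl⟩ | ⟨t, _, _, rfl⟩) <;>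
    exact (rt_mem_DeltaSinv_weylS_caseII_iff hme hm2).2 (by omega)

end DPW
end
end
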